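/- arXiv:2001.06116 — 3 statements merged into one kernel-verified Lean document; each statement's English description precedes it below -/
import Mathlib

section
/- Let V : ℝⁿ → ℝ be continuously differentiable, let α, ε, M > 0 be constants with ε‖x‖² ≤ V(x) ≤ M‖x‖² for all x ∈ ℝⁿ, and suppose ∇V(x) ≠ 0 for all x ≠ 0. Let f̂ : ℝⁿ → ℝⁿ be any function and define the projected dynamics f(x) = f̂(x) − ∇V(x) · ReLU(⟨∇V(x), f̂(x)⟩ + α V(x)) / ‖∇V(x)‖² for x with ∇V(x) ≠ 0, and f(x) = f̂(x) otherwise. Then any differentiable trajectory x : ℝ → ℝⁿ satisfying x'(t) = f(x(t)) for all t ≥ 0 obeys ‖x(t)‖ ≤ √(M/ε) · ‖x(0)‖ · e^{−αt/2} for all t ≥ 0; that is, the dynamics ẋ = f(x) are globally exponentially stable to the equilibrium point x = 0. -/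
/-!
`V` is a Lyapunov function for the projected dynamics: where `∇V(x) ≠ 0`, subtracting the ReLU
multiple of `∇V(x)` lands in the halfspace `⟪∇V(x), v⟫ ≤ -α V(x)`, and where `∇V(x) = 0` we have
`x = 0`, hence `V(x) = 0`, so the same inequality holds trivially. Along a trajectory this gives
`(V ∘ x)' ≤ -α (V ∘ x)`, so `V(x(t)) ≤ V(x(0)) e^{-αt}` by Grönwall, and the quadratic bounds on
`V` turn this into `ε ‖x(t)‖² ≤ M ‖x(0)‖² e^{-αt}`.
-/

open Real RealInnerProductSpace

theorem inner_sub_max_div_smul_le {E : Type*} [NormedAddCommGroup E] [InnerProductSpace ℝ E]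
    {g : E} (hg : g ≠ 0) (v : E) (c : ℝ) :
    ⟪g, v - (max (⟪g, v⟫ + c) 0 / ‖g‖ ^ 2) • g⟫ ≤ -c := by
  rw [inner_sub_right, real_inner_smul_right, real_inner_self_eq_norm_sq,
    div_mul_cancel₀ _ (by positivity)]
  linarith [le_max_left (⟪g, v⟫ + c) 0]

theorem HasGradientAt.hasDerivAt_comp {E : Type*} [NormedAddCommGroup E]
    [InnerProductSpace ℝ E] [CompleteSpace E] {V : E → ℝ} {g γ' : E} {γ : ℝ → E} {t : ℝ}
    (hV : HasGradientAt V g (γ t)) (hγ : HasDerivAt γ γ' t) :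
    HasDerivAt (fun s => V (γ s)) ⟪g, γ'⟫ t := by
  have h := hV.hasFDerivAt.comp_hasDerivAt t hγ
  rwa [InnerProductSpace.toDual_apply_apply] at h

theorem le_mul_exp_of_hasDerivAt_le_mul {W W' : ℝ → ℝ} {K t : ℝ}
    (hW : ∀ s, 0 ≤ s → HasDerivAt W (W' s) s) (hle : ∀ s, 0 ≤ s → W' s ≤ K * W s)
    (ht : 0 ≤ t) : W t ≤ W 0 * exp (K * t) := by
  have hbound := le_gronwallBound_of_liminf_deriv_right_le (a := 0) (b := t) (ε := 0)
    (fun s hs => (hW s hs.1).continuousAt.continuousWithinAt)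
    (fun s hs _ hr => (hW s hs.1).hasDerivWithinAt.liminf_right_slope_le hr) le_rfl
    (fun s hs => by simpa using hle s hs.1) t ⟨ht, le_rfl⟩
  simpa [gronwallBound_ε0] using hbound

theorem le_sqrt_div_mul_of_mul_sq_le {a b ε M : ℝ} (hε : 0 < ε) (hb : 0 ≤ b)
    (h : ε * a ^ 2 ≤ M * b ^ 2) : a ≤ √(M / ε) * b := by
  rw [← sqrt_sq hb, ← sqrt_mul' _ (sq_nonneg b)]
  apply le_sqrt_of_sq_le
  rw [div_mul_eq_mul_div, le_div_iff₀ hε]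
  linarith

theorem projected_dynamics_globally_exponentially_stable_general
    {n : ℕ} (V : EuclideanSpace ℝ (Fin n) → ℝ) (hV : ContDiff ℝ 1 V)
    (α ε M : ℝ) (hε : 0 < ε)
    (hlow : ∀ x, ε * ‖x‖ ^ 2 ≤ V x) (hup : ∀ x, V x ≤ M * ‖x‖ ^ 2)
    (hgradne : ∀ x, x ≠ 0 → gradient V x ≠ 0)
    (fhat f : EuclideanSpace ℝ (Fin n) → EuclideanSpace ℝ (Fin n))
    (hf : ∀ x, gradient V x ≠ 0 →
      f x = fhat x -
        (max (⟪gradient V x, fhat x⟫ + α * V x) 0 / ‖gradient V x‖ ^ 2) • gradient V x)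
    (x : ℝ → EuclideanSpace ℝ (Fin n)) (hx : Differentiable ℝ x)
    (hdyn : ∀ t, 0 ≤ t → deriv x t = f (x t)) :
    ∀ t, 0 ≤ t → ‖x t‖ ≤ Real.sqrt (M / ε) * ‖x 0‖ * Real.exp (-α * t / 2) := by
  have hV0 : V 0 = 0 := le_antisymm (by simpa using hup 0) (by simpa using hlow 0)
  have hdecay : ∀ y, ⟪gradient V y, f y⟫ ≤ -α * V y := by
    intro y
    by_cases hg : gradient V y = 0
    · obtain rfl : y = 0 := by_contra fun hy => hgradne y hy hg
      simp [hg, hV0]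
    · rw [hf y hg, neg_mul]
      exact inner_sub_max_div_smul_le hg _ _
  intro t ht
  have hVx : V (x t) ≤ V (x 0) * exp (-α * t) :=
    le_mul_exp_of_hasDerivAt_le_mul
      (fun s _ => ((hV.differentiable one_ne_zero) (x s)).hasGradientAt.hasDerivAt_comp
        (hx s).hasDerivAt)
      (fun s hs => hdyn s hs ▸ hdecay (x s)) ht
  rw [mul_assoc]
  refine le_sqrt_div_mul_of_mul_sq_le hε (by positivity) ?_
  calc ε * ‖x t‖ ^ 2 ≤ V (x t) := hlow _
    _ ≤ V (x 0) * exp (-α * t) := hVx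
    _ ≤ M * ‖x 0‖ ^ 2 * exp (-α * t) := by gcongr; exact hup _
    _ = M * (‖x 0‖ * exp (-α * t / 2)) ^ 2 := by
      rw [mul_pow, ← exp_nat_mul]; ring_nf

/-- the projected dynamics
`f(x) = f̂(x) − ∇V(x) · ReLU(⟨∇V(x), f̂(x)⟩ + α V(x)) / ‖∇V(x)‖²`
(when `∇V(x) ≠ 0`, and `f̂(x)` otherwise) are globally exponentially stable:
any differentiable trajectory with `x' = f(x)` on `t ≥ 0` satisfies
`‖x(t)‖ ≤ √(M/ε) ‖x(0)‖ e^{−αt/2}`. -/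
theorem projected_dynamics_globally_exponentially_stable
    {n : ℕ} (V : EuclideanSpace ℝ (Fin n) → ℝ) (hV : ContDiff ℝ 1 V)
    (α ε M : ℝ) (hα : 0 < α) (hε : 0 < ε) (hM : 0 < M)
    (hlow : ∀ x, ε * ‖x‖ ^ 2 ≤ V x) (hup : ∀ x, V x ≤ M * ‖x‖ ^ 2)
    (hgradne : ∀ x, x ≠ 0 → gradient V x ≠ 0)
    (fhat f : EuclideanSpace ℝ (Fin n) → EuclideanSpace ℝ (Fin n))
    (hf : ∀ x, gradient V x ≠ 0 →
      f x = fhat x -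
        (max (⟪gradient V x, fhat x⟫ + α * V x) 0 / ‖gradient V x‖ ^ 2) • gradient V x)
    (hf0 : ∀ x, gradient V x = 0 → f x = fhat x)
    (x : ℝ → EuclideanSpace ℝ (Fin n)) (hx : Differentiable ℝ x)
    (hdyn : ∀ t, 0 ≤ t → deriv x t = f (x t)) :
    ∀ t, 0 ≤ t → ‖x t‖ ≤ Real.sqrt (M / ε) * ‖x 0‖ * Real.exp (-α * t / 2) :=
  projected_dynamics_globally_exponentially_stable_general V hV α ε M hε hlow hup hgradne fhat f hf
    x hx hdyn
end

section
/- Let V : ℝⁿ → ℝ be differentiable, α ≥ 0, and f̂ : ℝⁿ → ℝⁿ. For any x ∈ ℝⁿ with ∇V(x) ≠ 0 and V(x) ≥ 0, the projected vector f(x) = f̂(x) − ∇V(x) · ReLU(⟨∇V(x), f̂(x)⟩ + α V(x)) / ‖∇V(x)‖² satisfies the Lyapunov decrease condition ⟨∇V(x), f(x)⟩ ≤ −α V(x). -/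
open RealInnerProductSpace

theorem inner_sub_div_norm_sq_smul_self {E : Type*} [NormedAddCommGroup E]
    [InnerProductSpace ℝ E] {g : E} (hg : g ≠ 0) (v : E) (t : ℝ) :
    ⟪g, v - (t / ‖g‖ ^ 2) • g⟫ = ⟪g, v⟫ - t := by
  rw [inner_sub_right, inner_smul_right, real_inner_self_eq_norm_sq,
    div_mul_cancel₀ t (pow_ne_zero 2 (norm_ne_zero_iff.mpr hg))]

theorem projected_vector_satisfies_decrease_condition_general
    {n : ℕ} (V : EuclideanSpace ℝ (Fin n) → ℝ)
    (α : ℝ)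
    (fhat : EuclideanSpace ℝ (Fin n) → EuclideanSpace ℝ (Fin n))
    (x : EuclideanSpace ℝ (Fin n))
    (hgrad : gradient V x ≠ 0) :
    ⟪gradient V x,
      fhat x -
        (max (⟪gradient V x, fhat x⟫ + α * V x) 0 / ‖gradient V x‖ ^ 2) •
          gradient V x⟫ ≤ -α * V x := by
  rw [inner_sub_div_norm_sq_smul_self hgrad]
  linarith [le_max_left (⟪gradient V x, fhat x⟫ + α * V x) 0]

/-- the projected vector satisfies the Lyapunov decrease condition
`⟨∇V(x), f(x)⟩ ≤ −α V(x)`. -/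
theorem projected_vector_satisfies_decrease_condition
    {n : ℕ} (V : EuclideanSpace ℝ (Fin n) → ℝ) (hV : Differentiable ℝ V)
    (α : ℝ) (hα : 0 ≤ α)
    (fhat : EuclideanSpace ℝ (Fin n) → EuclideanSpace ℝ (Fin n))
    (x : EuclideanSpace ℝ (Fin n))
    (hgrad : gradient V x ≠ 0) (hVx : 0 ≤ V x) :
    ⟪gradient V x,
      fhat x -
        (max (⟪gradient V x, fhat x⟫ + α * V x) 0 / ‖gradient V x‖ ^ 2) •
          gradient V x⟫ ≤ -α * V x :=
  projected_vector_satisfies_decrease_condition_general V α fhat x hgrad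
end

section
/- Let k ≥ 1, and consider the input-convex neural network (ICNN) g : ℝⁿ → ℝ^{m_k} defined by the recurrence z₁(x) = σ₀(W₀ x + b₀) and z_{i+1}(x) = σ_i(U_i z_i(x) + W_i x + b_i) for i = 1, …, k−1, with g(x) = z_k(x), where each W_i is a real matrix, each b_i a real vector, each U_i a matrix with all entries nonnegative, and each σ_i : ℝ → ℝ is convex and monotonically nondecreasing, applied componentwise. Then every component of g is a convex function of x on ℝⁿ. -/
/-! Each coordinate of a layer's pre-activation `U z + W x + b` is a nonnegative combination of
convex functions (the coordinates of the previous layer) plus an affine function of `x`, hence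
convex; a convex nondecreasing activation preserves convexity. Induction over the layers. -/

open Set Matrix

section

variable {𝕜 E β ι : Type*} [CommSemiring 𝕜] [PartialOrder 𝕜] [AddCommMonoid E] [Module 𝕜 E]

theorem ConvexOn.comp_of_monotone [AddCommMonoid β] [PartialOrder β] [Module 𝕜 β]
    {s : Set E} {f : E → 𝕜} {g : 𝕜 → β} (hg : ConvexOn 𝕜 univ g) (hg' : Monotone g)
    (hf : ConvexOn 𝕜 s f) : ConvexOn 𝕜 s (g ∘ f) :=
  ⟨hf.1, fun _ hx _ hy _ _ ha hb hab =>
    (hg' (hf.2 hx hy ha hb hab)).trans (hg.2 (mem_univ _) (mem_univ _) ha hb hab)⟩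

theorem ConvexOn.finset_sum [AddCommMonoid β] [PartialOrder β] [IsOrderedAddMonoid β]
    [Module 𝕜 β] {s : Set E} (hs : Convex 𝕜 s) {t : Finset ι} {f : ι → E → β}
    (hf : ∀ i ∈ t, ConvexOn 𝕜 s (f i)) : ConvexOn 𝕜 s (∑ i ∈ t, f i) :=
  Finset.sum_induction f (ConvexOn 𝕜 s) (fun _ _ => ConvexOn.add) (convexOn_const 0 hs) hf

variable [IsOrderedRing 𝕜] {p q : Type*} [Fintype q]

theorem convexOn_mulVec_apply_of_nonneg {s : Set E} (hs : Convex 𝕜 s)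
    {U : Matrix p q 𝕜} (hU : ∀ i l, 0 ≤ U i l) {z : E → q → 𝕜}
    (hz : ∀ l, ConvexOn 𝕜 s fun x => z x l) (i : p) :
    ConvexOn 𝕜 s fun x => (U *ᵥ z x) i := by
  have hsum : (fun x => (U *ᵥ z x) i) = ∑ l, fun x => U i l • z x l := by
    funext x
    simp [mulVec, dotProduct, Finset.sum_apply]
  rw [hsum]
  exact ConvexOn.finset_sum hs fun l _ => (hz l).smul (hU i l)

theorem convexOn_mulVec_add_apply {s : Set (q → 𝕜)} (hs : Convex 𝕜 s) (W : Matrix p q 𝕜)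
    (b : p → 𝕜) (i : p) : ConvexOn 𝕜 s fun x => (W *ᵥ x + b) i :=
  ((LinearMap.proj i ∘ₗ W.mulVecLin).convexOn hs).add_const (b i)

end

/-- every component of an input-convex neural network (ICNN), with
nonnegative `U` weights and convex nondecreasing scalar activations applied
componentwise, is a convex function of the input. -/
theorem icnn_components_convex
    {n k : ℕ} (hk : 1 ≤ k) (m : ℕ → ℕ)
    (W : ∀ i : ℕ, Matrix (Fin (m (i + 1))) (Fin n) ℝ)
    (U : ∀ i : ℕ, Matrix (Fin (m (i + 1))) (Fin (m i)) ℝ)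
    (b : ∀ i : ℕ, Fin (m (i + 1)) → ℝ)
    (σ : ℕ → ℝ → ℝ)
    (hσconv : ∀ i, ConvexOn ℝ Set.univ (σ i))
    (hσmono : ∀ i, Monotone (σ i))
    (hU : ∀ i p q, 0 ≤ U i p q)
    (z : ∀ i : ℕ, (Fin n → ℝ) → Fin (m i) → ℝ)
    (hz1 : ∀ x j, z 1 x j = σ 0 ((Matrix.mulVec (W 0) x + b 0) j))
    (hz : ∀ i, 1 ≤ i → ∀ x j,
      z (i + 1) x j =
        σ i ((Matrix.mulVec (U i) (z i x) + Matrix.mulVec (W i) x + b i) j)) :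
    ∀ j : Fin (m k), ConvexOn ℝ Set.univ (fun x : Fin n → ℝ => z k x j) := by
  induction k, hk using Nat.le_induction with
  | base =>
    intro j
    simp_rw [hz1]
    exact (hσconv 0).comp_of_monotone (hσmono 0)
      (convexOn_mulVec_add_apply convex_univ (W 0) (b 0) j)
  | succ i hi ih =>
    intro j
    have hpre : ConvexOn ℝ univ fun x => (U i *ᵥ z i x + W i *ᵥ x + b i) j := by
      simp only [add_assoc]
      exact (convexOn_mulVec_apply_of_nonneg convex_univ (hU i) ih j).add
        (convexOn_mulVec_add_apply convex_univ (W i) (b i) j)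
    simp_rw [hz i hi]
    exact (hσconv i).comp_of_monotone (hσmono i) hpre
end
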